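/- arXiv:1805.07174 — 4 statements merged into one kernel-verified Lean document; each statement's English description precedes it below -/
import Mathlib

section
/- Let $\mu_0$ be a $\sigma$-finite measure on a measurable space $(G,\mathcal G)$, $\rho: G \to [0,\infty)$ measurable with $Z = \int_G \rho \, d\mu_0 \in (0,\infty)$, and $\mu$ defined by $d\mu/d\mu_0 = \rho/Z$. Let $P$ be a Markov kernel on $G$ such that $P(x,\cdot)$ has density $p(x,\cdot)$ w.r.t. $\mu_0$ and $\rho(y) > 0 \Rightarrow p(x,y) > 0$ for all $x$. Define $\bar\rho(x,y) = \rho(y)/p(x,y)$ when $\rho(y)>0$ and $0$ otherwise. Then for any $f \in L^1(\mu)$: $\mathbb{E}_\mu(f) = \frac{\int_G \int_G f(y) \bar\rho(x,y) P(x,dy) \mu(dx)}{\int_G \int_G \bar\rho(x,y) P(x,dy) \mu(dx)}$. -/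
open MeasureTheory ProbabilityTheory ENNReal Filter

/-- For the Metropolis–Hastings importance sampling setting,
`E_μ(f)` equals the ratio of the weighted integrals. -/
theorem mh_importance_sampling_ratio
    {G : Type*} [MeasurableSpace G]
    (μ₀ : Measure G) [SigmaFinite μ₀]
    (ρ : G → ℝ) (hρm : Measurable ρ) (hρ0 : ∀ x, 0 ≤ ρ x) (hρint : Integrable ρ μ₀)
    (Z : ℝ) (hZ : Z = ∫ x, ρ x ∂μ₀) (hZpos : 0 < Z)
    (μ : Measure G) (hμ : μ = μ₀.withDensity fun x => ENNReal.ofReal (ρ x / Z))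
    (P : Kernel G G) [IsMarkovKernel P]
    (p : G → G → ℝ) (hpm : Measurable (Function.uncurry p)) (hp0 : ∀ x y, 0 ≤ p x y)
    (hP : ∀ x, P x = μ₀.withDensity fun y => ENNReal.ofReal (p x y))
    (hpos : ∀ x y, 0 < ρ y → 0 < p x y)
    (bar : G → G → ℝ) (hbar : ∀ x y, bar x y = if 0 < ρ y then ρ y / p x y else 0)
    (f : G → ℝ) (hf : Integrable f μ) :
    ∫ y, f y ∂μ =
      (∫ x, ∫ y, f y * bar x y ∂(P x) ∂μ) / (∫ x, ∫ y, bar x y ∂(P x) ∂μ) := by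
  set C := ∫ y, f y * ρ y ∂μ₀ with hC
  -- μ is a probability measure
  have hμprob : IsProbabilityMeasure μ := by
    constructor
    rw [hμ, withDensity_apply _ MeasurableSet.univ, Measure.restrict_univ]
    have hint : Integrable (fun x => ρ x / Z) μ₀ := hρint.div_const Z
    rw [← ofReal_integral_eq_lintegral_ofReal hint
      (Filter.Eventually.of_forall fun x => div_nonneg (hρ0 x) hZpos.le)]
    rw [integral_div, ← hZ, div_self hZpos.ne']
    simp
  -- pointwise identity: p x y * (g y * bar x y) = g y * ρ y
  have key : ∀ (g : G → ℝ) (x y : G), p x y * (g y * bar x y) = g y * ρ y := by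
    intro g x y
    by_cases h : 0 < ρ y
    · rw [hbar, if_pos h]
      field_simp [(hpos x y h).ne']
    · have h0 : ρ y = 0 := le_antisymm (not_lt.1 h) (hρ0 y)
      rw [hbar, if_neg h, h0]
      ring
  -- inner integrals
  have hinner : ∀ (g : G → ℝ) (x : G), ∫ y, g y * bar x y ∂(P x) = ∫ y, g y * ρ y ∂μ₀ := by
    intro g x
    rw [hP x]
    have hm : Measurable fun y => (p x y).toNNReal :=
      (hpm.comp measurable_prodMk_left).real_toNNReal
    have hd : (fun y => ENNReal.ofReal (p x y)) = fun y => ((p x y).toNNReal : ℝ≥0∞) := rfl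
    rw [hd, integral_withDensity_eq_integral_smul hm]
    congr 1
    ext y
    rw [NNReal.smul_def, Real.coe_toNNReal _ (hp0 x y), smul_eq_mul, key g x y]
  have hinner1 : ∀ x, ∫ y, f y * bar x y ∂(P x) = C := fun x => hinner f x
  have hinner2 : ∀ x, ∫ y, bar x y ∂(P x) = Z := by
    intro x
    have := hinner (fun _ => 1) x
    simpa [hZ] using this
  -- left-hand side
  have hLHS : ∫ y, f y ∂μ = C / Z := by
    rw [hμ]
    have hm : Measurable fun y => (ρ y / Z).toNNReal :=
      (hρm.div_const Z).real_toNNReal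
    have hd : (fun y => ENNReal.ofReal (ρ y / Z)) = fun y => ((ρ y / Z).toNNReal : ℝ≥0∞) := rfl
    rw [hd, integral_withDensity_eq_integral_smul hm]
    have : ∀ y, (ρ y / Z).toNNReal • f y = f y * ρ y / Z := by
      intro y
      rw [NNReal.smul_def, Real.coe_toNNReal _ (div_nonneg (hρ0 y) hZpos.le), smul_eq_mul]
      ring
    simp_rw [this]
    rw [integral_div]
  rw [hLHS]
  have h1 : ∫ x, ∫ y, f y * bar x y ∂(P x) ∂μ = C := by
    simp_rw [hinner1]
    simp
  have h2 : ∫ x, ∫ y, bar x y ∂(P x) ∂μ = Z := by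
    simp_rw [hinner2]
    simp
  rw [h1, h2]
end

section
/- With $\mathrm K$ the MH transition operator on $L^2(\mu)$, $\mathrm K_{\mathrm{aug}}$ the transition operator on $L^2(\nu)$ of the augmented kernel $K_{\mathrm{aug}}((x,y),du\,dv) = \alpha(x,y)\delta_y(du)P(y,dv) + (1-\alpha(x,y))\delta_x(du)P(x,dv)$, $\mathrm H$ the swap-or-stay operator, and $\widehat{\mathrm P}$, $\widehat{\mathrm P}^*$ as above, one has the operator identities $\mathrm K = \widehat{\mathrm P}\, \mathrm H\, \widehat{\mathrm P}^*$ and $\mathrm K_{\mathrm{aug}} = \mathrm H\, \widehat{\mathrm P}^*\, \widehat{\mathrm P}$. -/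
/-!
Both identities are evaluated directly on the explicit mixtures defining `K x` and
`Kaug (x, y)`. Being the minimum of `1` and a nonnegative ratio, the acceptance probability `α`
is measurable with values in `[0, 1]`, so `α` and `1 - α` are genuine mixture weights: the
integrand is integrable against every component and the integral splits linearly over the
mixture, while integrating against `δ_x ⊗ P x` just freezes the first coordinate at `x`.
-/

open MeasureTheory ProbabilityTheory ENNReal Filter

section Mixtures

variable {X : Type*} [MeasurableSpace X]

theorem integral_withDensity_ofReal {ν : Measure X} {a : X → ℝ} (ha : Measurable a)
    (ha0 : ∀ y, 0 ≤ a y) (f : X → ℝ) :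
    ∫ y, f y ∂ν.withDensity (fun y => ENNReal.ofReal (a y)) = ∫ y, a y * f y ∂ν := by
  rw [integral_withDensity_eq_integral_toReal_smul ha.ennreal_ofReal
    (ae_of_all _ fun _ => ofReal_lt_top)]
  simp_rw [toReal_ofReal (ha0 _), smul_eq_mul]

theorem MeasureTheory.Integrable.withDensity_ofReal {ν : Measure X} {a : X → ℝ}
    (ha : Measurable a) (ha0 : ∀ y, 0 ≤ a y) (ha1 : ∀ y, a y ≤ 1) {f : X → ℝ}
    (hf : Integrable f ν) : Integrable f (ν.withDensity fun y => ENNReal.ofReal (a y)) := by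
  rw [integrable_withDensity_iff ha.ennreal_ofReal (ae_of_all _ fun _ => ofReal_lt_top)]
  refine hf.mul_bdd (c := 1) ha.ennreal_ofReal.ennreal_toReal.aestronglyMeasurable
    (ae_of_all _ fun y => ?_)
  rw [toReal_ofReal (ha0 y), Real.norm_of_nonneg (ha0 y)]
  exact ha1 y

theorem integral_withDensity_add_smul_dirac {ν : Measure X} [IsFiniteMeasure ν] {a : X → ℝ}
    (ha : Measurable a) (ha0 : ∀ y, 0 ≤ a y) (ha1 : ∀ y, a y ≤ 1) {f : X → ℝ}
    (hf : Measurable f) (hfν : Integrable f ν) (x : X) :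
    ∫ z, f z ∂(ν.withDensity (fun y => ENNReal.ofReal (a y)) +
        ENNReal.ofReal (∫ y, (1 - a y) ∂ν) • Measure.dirac x) =
      ∫ y, (a y * f y + (1 - a y) * f x) ∂ν := by
  have ha_bdd : ∀ᵐ y ∂ν, ‖a y‖ ≤ 1 :=
    ae_of_all _ fun y => by rw [Real.norm_of_nonneg (ha0 y)]; exact ha1 y
  have hstay : Integrable (fun y => (1 - a y) * f x) ν :=
    ((integrable_const 1).sub
      ((integrable_const 1).mono' ha.aestronglyMeasurable ha_bdd)).mul_const _
  have hdirac : Integrable f (Measure.dirac x) :=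
    integrable_dirac' hf.stronglyMeasurable enorm_lt_top
  rw [integral_add_measure (hfν.withDensity_ofReal ha ha0 ha1)
      (hdirac.smul_measure ofReal_ne_top),
    integral_smul_measure, integral_withDensity_ofReal ha ha0,
    integral_dirac' f x hf.stronglyMeasurable,
    toReal_ofReal (integral_nonneg fun y => sub_nonneg.mpr (ha1 y)),
    integral_add (hfν.bdd_mul ha.aestronglyMeasurable ha_bdd) hstay,
    integral_mul_const, smul_eq_mul]

theorem integral_ofReal_smul_add_ofReal_smul {m₁ m₂ : Measure X} {a b : ℝ} (ha : 0 ≤ a)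
    (hb : 0 ≤ b) {g : X → ℝ} (hg₁ : Integrable g m₁) (hg₂ : Integrable g m₂) :
    ∫ z, g z ∂(ENNReal.ofReal a • m₁ + ENNReal.ofReal b • m₂) =
      a * ∫ z, g z ∂m₁ + b * ∫ z, g z ∂m₂ := by
  rw [integral_add_measure (hg₁.smul_measure ofReal_ne_top) (hg₂.smul_measure ofReal_ne_top),
    integral_smul_measure, integral_smul_measure, toReal_ofReal ha, toReal_ofReal hb,
    smul_eq_mul, smul_eq_mul]

end Mixtures

section DiracProd

variable {X Y : Type*} [MeasurableSpace X] [MeasurableSpace Y] {ν : Measure Y} [SFinite ν]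
  {g : X × Y → ℝ}

theorem integral_dirac_prod (hg : Measurable g) (x : X) :
    ∫ q, g q ∂(Measure.dirac x).prod ν = ∫ v, g (x, v) ∂ν := by
  rw [Measure.dirac_prod, integral_map measurable_prodMk_left.aemeasurable
    hg.aestronglyMeasurable]

theorem integrable_dirac_prod (hg : Measurable g) {x : X}
    (hgx : Integrable (fun v => g (x, v)) ν) : Integrable g ((Measure.dirac x).prod ν) := by
  rw [Measure.dirac_prod]
  exact (integrable_map_measure hg.aestronglyMeasurable
    measurable_prodMk_left.aemeasurable).mpr hgx

end DiracProd

section Acceptance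

variable {G : Type*} {ρ : G → ℝ} {p : G → G → ℝ}

noncomputable def mhRatio (ρ : G → ℝ) (p : G → G → ℝ) (x y : G) : ℝ :=
  if 0 < ρ x * p x y then ρ y * p y x / (ρ x * p x y) else 1

noncomputable def mhAcceptance (ρ : G → ℝ) (p : G → G → ℝ) (x y : G) : ℝ :=
  min 1 (mhRatio ρ p x y)

theorem mhRatio_nonneg (hρ0 : ∀ x, 0 ≤ ρ x) (hp0 : ∀ x y, 0 ≤ p x y) (x y : G) :
    0 ≤ mhRatio ρ p x y := by
  unfold mhRatio
  split_ifs with h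
  · exact div_nonneg (mul_nonneg (hρ0 y) (hp0 y x)) h.le
  · exact zero_le_one

theorem measurable_mhRatio [MeasurableSpace G] (hρ : Measurable ρ)
    (hp : Measurable (Function.uncurry p)) :
    Measurable (Function.uncurry (mhRatio ρ p)) := by
  have hpxy : Measurable fun q : G × G => p q.1 q.2 := hp
  have hpyx : Measurable fun q : G × G => p q.2 q.1 := hp.comp measurable_swap
  have hden : Measurable fun q : G × G => ρ q.1 * p q.1 q.2 :=
    (hρ.comp measurable_fst).mul hpxy
  exact Measurable.ite (measurableSet_lt measurable_const hden)
    (((hρ.comp measurable_snd).mul hpyx).div hden) measurable_const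

theorem mhAcceptance_nonneg (hρ0 : ∀ x, 0 ≤ ρ x) (hp0 : ∀ x y, 0 ≤ p x y) (x y : G) :
    0 ≤ mhAcceptance ρ p x y :=
  le_min zero_le_one (mhRatio_nonneg hρ0 hp0 x y)

theorem mhAcceptance_le_one (x y : G) : mhAcceptance ρ p x y ≤ 1 :=
  min_le_left _ _

theorem measurable_mhAcceptance [MeasurableSpace G] (hρ : Measurable ρ)
    (hp : Measurable (Function.uncurry p)) (x : G) :
    Measurable (mhAcceptance ρ p x) :=
  measurable_const.min ((measurable_mhRatio hρ hp).comp measurable_prodMk_left)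

end Acceptance

theorem mh_operator_factorizations_general
    {G : Type*} [MeasurableSpace G]
    (ρ : G → ℝ) (hρm : Measurable ρ) (hρ0 : ∀ x, 0 ≤ ρ x)
    (P : Kernel G G) [IsMarkovKernel P]
    (p : G → G → ℝ) (hpm : Measurable (Function.uncurry p)) (hp0 : ∀ x y, 0 ≤ p x y)
    (r : G → G → ℝ)
    (hr : ∀ x y, r x y = if 0 < ρ x * p x y then ρ y * p y x / (ρ x * p x y) else 1)
    (α : G → G → ℝ) (hα : ∀ x y, α x y = min 1 (r x y))
    (K : Kernel G G)
    (hK : ∀ x, K x = (P x).withDensity (fun y => ENNReal.ofReal (α x y)) +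
      ENNReal.ofReal (∫ y, (1 - α x y) ∂(P x)) • Measure.dirac x)
    (Kaug : Kernel (G × G) (G × G))
    (hKaug : ∀ x y, Kaug (x, y) =
      ENNReal.ofReal (α x y) • ((Measure.dirac y).prod (P y)) +
      ENNReal.ofReal (1 - α x y) • ((Measure.dirac x).prod (P x)))
    : (∀ f : G → ℝ, Measurable f → (∀ x, Integrable f (P x)) →
        ∀ x, ∫ z, f z ∂(K x) =
          ∫ y, (α x y * f y + (1 - α x y) * f x) ∂(P x)) ∧
      (∀ g : G × G → ℝ, Measurable g →
        (∀ x, Integrable (fun v => g (x, v)) (P x)) →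
        ∀ x y, ∫ q, g q ∂(Kaug (x, y)) =
          α x y * (∫ v, g (y, v) ∂(P y)) + (1 - α x y) * (∫ v, g (x, v) ∂(P x))) := by
  obtain rfl : α = mhAcceptance ρ p := by
    funext x y
    rw [hα, hr]
    rfl
  have hα0 := mhAcceptance_nonneg hρ0 hp0
  have hα1 : ∀ x y, mhAcceptance ρ p x y ≤ 1 := mhAcceptance_le_one
  refine ⟨fun f hf hfP x => ?_, fun g hg hgP x y => ?_⟩
  · rw [hK x]
    exact integral_withDensity_add_smul_dirac (measurable_mhAcceptance hρm hpm x) (hα0 x)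
      (hα1 x) hf (hfP x) x
  · rw [hKaug x y, integral_ofReal_smul_add_ofReal_smul (hα0 x y) (sub_nonneg.mpr (hα1 x y))
      (integrable_dirac_prod hg (hgP y)) (integrable_dirac_prod hg (hgP x)),
      integral_dirac_prod hg, integral_dirac_prod hg]

/-- The operator identities K = P̂ H P̂* and K_aug = H P̂* P̂. -/
theorem mh_operator_factorizations
    {G : Type*} [MeasurableSpace G]
    (μ₀ : Measure G) [SigmaFinite μ₀]
    (ρ : G → ℝ) (hρm : Measurable ρ) (hρ0 : ∀ x, 0 ≤ ρ x) (hρint : Integrable ρ μ₀)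
    (Z : ℝ) (hZ : Z = ∫ x, ρ x ∂μ₀) (hZpos : 0 < Z)
    (μ : Measure G) [SFinite μ]
    (hμ : μ = μ₀.withDensity fun x => ENNReal.ofReal (ρ x / Z))
    (P : Kernel G G) [IsMarkovKernel P]
    (p : G → G → ℝ) (hpm : Measurable (Function.uncurry p)) (hp0 : ∀ x y, 0 ≤ p x y)
    (hP : ∀ x, P x = μ₀.withDensity fun y => ENNReal.ofReal (p x y))
    (hpos : ∀ x y, 0 < ρ y → 0 < p x y)
    (bar : G → G → ℝ) (hbar : ∀ x y, bar x y = if 0 < ρ y then ρ y / p x y else 0)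
    (r : G → G → ℝ)
    (hr : ∀ x y, r x y = if 0 < ρ x * p x y then ρ y * p y x / (ρ x * p x y) else 1)
    (α : G → G → ℝ) (hα : ∀ x y, α x y = min 1 (r x y))
    (K : Kernel G G) [IsMarkovKernel K]
    (hK : ∀ x, K x = (P x).withDensity (fun y => ENNReal.ofReal (α x y)) +
      ENNReal.ofReal (∫ y, (1 - α x y) ∂(P x)) • Measure.dirac x)
    (Kaug : Kernel (G × G) (G × G)) [IsMarkovKernel Kaug]
    (hKaug : ∀ x y, Kaug (x, y) =
      ENNReal.ofReal (α x y) • ((Measure.dirac y).prod (P y)) +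
      ENNReal.ofReal (1 - α x y) • ((Measure.dirac x).prod (P x)))
    : (∀ f : G → ℝ, Measurable f → (∀ x, Integrable f (P x)) →
        ∀ x, ∫ z, f z ∂(K x) =
          ∫ y, (α x y * f y + (1 - α x y) * f x) ∂(P x)) ∧
      (∀ g : G × G → ℝ, Measurable g →
        (∀ x, Integrable (fun v => g (x, v)) (P x)) →
        ∀ x y, ∫ q, g q ∂(Kaug (x, y)) =
          α x y * (∫ v, g (y, v) ∂(P y)) + (1 - α x y) * (∫ v, g (x, v) ∂(P x))) :=
  mh_operator_factorizations_general ρ hρm hρ0 P p hpm hp0 r hr α hα K hK Kaug hKaug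
end

section
/- If the MH Markov chain $(X_n)$ is Harris recurrent w.r.t. $\phi$, then the augmented chain $(X_n, Y_n)$ (state together with next proposal) is Harris recurrent w.r.t. the measure $\phi_P(dx\,dy) = P(x,dy)\phi(dx)$: for every set $A$ with $\phi_P(A)>0$ and every starting point, almost surely $(X_n,Y_n) \in A$ for infinitely many $n$. -/
/-!
Every move of the augmented chain draws the new proposal from `P` given the new state, so the
state process `(W (n + 1)).1` is itself a Markov chain, with kernel `K` (the `P`-average of the
first marginal of `Kaug`). If `φ_P A > 0`, some `ε > 0` makes `B = {x | ε < P x A_x}` of positive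
`φ`-measure, and Harris recurrence of `K` sends the state into `B` infinitely often. Since
`Kaug w A ≥ ε * Kaug w (B × G)`, Lévy's conditional Borel–Cantelli lemma turns the divergence of
`∑ₖ Kaug (W k) (B × G)` into that of `∑ₖ Kaug (W k) A`, i.e. `W` visits `A` infinitely often.
-/

open MeasureTheory ProbabilityTheory ENNReal Filter

/-- The process `W` is a time-homogeneous Markov chain with transition kernel `κ`
under `Pr`: the conditional expectation of `1_A (W (n+1))` given the natural
σ-algebra generated by `W 0, …, W n` is `(κ (W n) A).toReal`. -/
def IsMarkovChain {S Ω : Type*} [MeasurableSpace S] [mΩ : MeasurableSpace Ω]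
    (Pr : Measure Ω) (κ : Kernel S S) (W : ℕ → Ω → S) : Prop :=
  (∀ n, Measurable (W n)) ∧
  ∀ (n : ℕ) (A : Set S), MeasurableSet A →
    (Pr[fun ω => Set.indicator A (fun _ => (1 : ℝ)) (W (n + 1) ω) |
        ⨆ i ∈ Finset.range (n + 1), MeasurableSpace.comap (W i) inferInstance])
      =ᵐ[Pr] fun ω => (κ (W n ω) A).toReal

/-- A kernel `κ` is Harris recurrent w.r.t. a measure `φ`: for every Markov chain
with transition kernel `κ` (any initial distribution) and every set of positive
`φ`-measure, the set is visited infinitely often almost surely. -/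
def HarrisRecurrent {S : Type*} [MeasurableSpace S] (κ : Kernel S S) (φ : Measure S) : Prop :=
  ∀ (Ω : Type) (mΩ : MeasurableSpace Ω) (Pr : Measure Ω), IsProbabilityMeasure Pr →
    ∀ W : ℕ → Ω → S, IsMarkovChain Pr κ W →
      ∀ A : Set S, MeasurableSet A → 0 < φ A →
        ∀ᵐ ω ∂Pr, {n | W n ω ∈ A}.Infinite

open Set

namespace MeasurableSpace

variable {Ω : Type*}

lemma isPiSystem_image2_inter (m₁ m₂ : MeasurableSpace Ω) :
    IsPiSystem (image2 (· ∩ ·) {s | MeasurableSet[m₁] s} {t | MeasurableSet[m₂] t}) := by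
  rintro _ ⟨s₁, hs₁, t₁, ht₁, rfl⟩ _ ⟨s₂, hs₂, t₂, ht₂, rfl⟩ -
  exact ⟨s₁ ∩ s₂, hs₁.inter hs₂, t₁ ∩ t₂, ht₁.inter ht₂, inter_inter_inter_comm _ _ _ _⟩

lemma sup_eq_generateFrom_image2_inter (m₁ m₂ : MeasurableSpace Ω) :
    m₁ ⊔ m₂ =
      generateFrom (image2 (· ∩ ·) {s | MeasurableSet[m₁] s} {t | MeasurableSet[m₂] t}) := by
  refine le_antisymm (sup_le ?_ ?_) (generateFrom_le ?_)
  · exact fun s hs => measurableSet_generateFrom ⟨s, hs, univ, MeasurableSet.univ, inter_univ s⟩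
  · exact fun t ht => measurableSet_generateFrom ⟨univ, MeasurableSet.univ, t, ht, univ_inter t⟩
  · rintro _ ⟨s, hs, t, ht, rfl⟩
    exact (le_sup_left (b := m₂) s hs).inter (le_sup_right (a := m₁) t ht)

end MeasurableSpace

namespace MeasureTheory.Measure

variable {S T : Type*} [MeasurableSpace S] [MeasurableSpace T] {P : Kernel S T}

lemma dirac_prod_eq_dirac_compProd [IsSFiniteKernel P] (x : S) :
    (Measure.dirac x).prod (P x) = Measure.dirac x ⊗ₘ P := by
  ext t ht
  rw [prod_apply ht, compProd_apply ht,
    lintegral_dirac' x (measurable_measure_prodMk_left ht),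
    lintegral_dirac' x (Kernel.measurable_kernel_prodMk_left ht)]

lemma lintegral_compProd_eq_of_lintegral_eq [IsMarkovKernel P] (ν : Measure S) [SFinite ν]
    {g : S × T → ℝ≥0∞} {h : S → ℝ≥0∞} (hg : Measurable g) (hh : Measurable h)
    (hgh : ∀ u, ∫⁻ v, g (u, v) ∂(P u) = h u) :
    ∫⁻ z, g z ∂(ν ⊗ₘ P) = ∫⁻ z, h z.1 ∂(ν ⊗ₘ P) := by
  rw [lintegral_compProd hg, lintegral_compProd (f := fun z => h z.1) (hh.comp measurable_fst)]
  simp only [hgh, lintegral_const, measure_univ, mul_one]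

lemma mul_compProd_fst_preimage_le [IsMarkovKernel P] (ν : Measure S) [SFinite ν]
    {A : Set (S × T)} (hA : MeasurableSet A) {B : Set S} (hB : MeasurableSet B) {ε : ℝ≥0∞}
    (hε : ∀ u ∈ B, ε ≤ P u (Prod.mk u ⁻¹' A)) :
    ε * (ν ⊗ₘ P) (Prod.fst ⁻¹' B) ≤ (ν ⊗ₘ P) A :=
  calc ε * (ν ⊗ₘ P) (Prod.fst ⁻¹' B) = ∫⁻ u, B.indicator (fun _ => ε) u ∂ν := by
        rw [← Measure.fst_apply hB, Measure.fst_compProd, lintegral_indicator_const hB, mul_comm]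
    _ ≤ ∫⁻ u, P u (Prod.mk u ⁻¹' A) ∂ν := lintegral_mono fun u => by
        by_cases hu : u ∈ B
        · simpa [hu] using hε u hu
        · simp [hu]
    _ = (ν ⊗ₘ P) A := (Measure.compProd_apply hA).symm

end MeasureTheory.Measure

namespace MeasureTheory

lemma exists_pos_measure_lt_of_lintegral_pos {S : Type*} [MeasurableSpace S] {φ : Measure S}
    {g : S → ℝ≥0∞} (h : 0 < ∫⁻ x, g x ∂φ) : ∃ ε, 0 < ε ∧ ε ≠ ∞ ∧ 0 < φ {x | ε < g x} := by
  by_contra! hnull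
  have hsub : {x | g x ≠ 0} ⊆ ⋃ n : ℕ, {x | ((n : ℝ≥0∞) + 1)⁻¹ < g x} := fun x hx => by
    obtain ⟨n, hn⟩ := exists_inv_nat_lt hx
    exact mem_iUnion.2 ⟨n, lt_of_le_of_lt (ENNReal.inv_le_inv.2 le_self_add) hn⟩
  have hg : g =ᵐ[φ] 0 := measure_mono_null hsub <| measure_iUnion_null fun n =>
    nonpos_iff_eq_zero.1 (hnull _ (by simp) (by simp))
  simp [lintegral_congr_ae hg] at h

lemma measure_inter_eq_lintegral_iff_condExp_indicator {Ω : Type*} {m mΩ : MeasurableSpace Ω}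
    (hm : m ≤ mΩ) {μ : Measure Ω} [IsFiniteMeasure μ] {s : Set Ω} (hs : MeasurableSet s)
    {g : Ω → ℝ≥0∞} (hg : Measurable[m] g) (hg_le : ∀ ω, g ω ≤ 1) :
    μ[s.indicator (fun _ => (1 : ℝ)) | m] =ᵐ[μ] (fun ω => (g ω).toReal) ↔
      ∀ t, MeasurableSet[m] t → μ (s ∩ t) = ∫⁻ ω in t, g ω ∂μ := by
  have hs_int : Integrable (s.indicator fun _ => (1 : ℝ)) μ := (integrable_const 1).indicator hs
  have hg_int : Integrable (fun ω => (g ω).toReal) μ := by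
    refine Integrable.of_bound (hg.mono hm le_rfl).ennreal_toReal.aestronglyMeasurable 1
      (ae_of_all _ fun ω => ?_)
    rw [Real.norm_eq_abs, abs_of_nonneg toReal_nonneg]
    exact toReal_le_of_le_ofReal zero_le_one (by simpa using hg_le ω)
  have hset : ∀ t, MeasurableSet[m] t →
      ((∫ ω in t, (g ω).toReal ∂μ = ∫ ω in t, s.indicator (fun _ => (1 : ℝ)) ω ∂μ) ↔
        μ (s ∩ t) = ∫⁻ ω in t, g ω ∂μ) := by
    intro t ht
    have hfin : ∫⁻ ω in t, g ω ∂μ ≠ ∞ :=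
      ne_top_of_le_ne_top (measure_ne_top μ t)
        (by simpa using setLIntegral_mono' (hm t ht) fun ω _ => hg_le ω)
    rw [integral_toReal (hg.mono hm le_rfl).aemeasurable
        (ae_of_all _ fun ω => (hg_le ω).trans_lt one_lt_top),
      integral_indicator_const _ hs, measureReal_restrict_apply hs, smul_eq_mul, mul_one,
      Measure.real, toReal_eq_toReal_iff' hfin (measure_ne_top μ _), eq_comm]
  constructor
  · intro h t ht
    rw [← hset t ht, ← setIntegral_condExp hm hs_int ht]
    exact setIntegral_congr_ae (hm t ht) (h.mono fun ω hω _ => hω.symm)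
  · intro h
    exact (ae_eq_condExp_of_forall_setIntegral_eq hm hs_int (fun t _ _ => hg_int.integrableOn)
      (fun t ht _ => (hset t ht).2 (h t ht))
      hg.ennreal_toReal.stronglyMeasurable.aestronglyMeasurable).symm

lemma setLIntegral_inter_preimage {S Ω : Type*} [MeasurableSpace S] {mΩ : MeasurableSpace Ω}
    {μ : Measure Ω} {X : Ω → S} (hX : Measurable X) {E : Set S}
    (hE : MeasurableSet E) (F : Set Ω) (f : S → ℝ≥0∞) :
    ∫⁻ ω in F ∩ X ⁻¹' E, f (X ω) ∂μ = ∫⁻ ω in F, E.indicator f (X ω) ∂μ := by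
  rw [inter_comm, ← Measure.restrict_restrict (hX hE), ← lintegral_indicator (hX hE)]
  rfl

end MeasureTheory

section MarkovChain

variable {S Ω : Type*} [MeasurableSpace S] {mΩ : MeasurableSpace Ω}

abbrev pastSigma (W : ℕ → Ω → S) (n : ℕ) : MeasurableSpace Ω :=
  ⨆ i ∈ Finset.range (n + 1), MeasurableSpace.comap (W i) inferInstance

lemma measurable_pastSigma {W : ℕ → Ω → S} {i n : ℕ} (h : i ≤ n) :
    Measurable[pastSigma W n] (W i) :=
  measurable_iff_comap_le.2 <| le_iSup₂ (f := fun i (_ : i ∈ Finset.range (n + 1)) =>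
    MeasurableSpace.comap (W i) inferInstance) i (Finset.mem_range.2 (Nat.lt_succ_of_le h))

lemma pastSigma_mono {W : ℕ → Ω → S} : Monotone (pastSigma W) := fun _ _ hmn =>
  iSup₂_le fun _ hi =>
    (measurable_pastSigma ((Nat.lt_succ_iff.1 (Finset.mem_range.1 hi)).trans hmn)).comap_le

lemma pastSigma_le {W : ℕ → Ω → S} (hW : ∀ n, Measurable (W n)) (n : ℕ) : pastSigma W n ≤ mΩ :=
  iSup₂_le fun i _ => (hW i).comap_le

def pastFiltration {W : ℕ → Ω → S} (hW : ∀ n, Measurable (W n)) : Filtration ℕ mΩ :=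
  ⟨pastSigma W, pastSigma_mono, pastSigma_le hW⟩

namespace IsMarkovChain

variable {Pr : Measure Ω} [IsProbabilityMeasure Pr] {κ : Kernel S S} {W : ℕ → Ω → S}

lemma measure_preimage_succ_inter [IsMarkovKernel κ] (hW : IsMarkovChain Pr κ W) (n : ℕ) {C : Set Ω}
    (hC : MeasurableSet[pastSigma W n] C) {E : Set S} (hE : MeasurableSet E) :
    Pr (W (n + 1) ⁻¹' E ∩ C) = ∫⁻ ω in C, κ (W n ω) E ∂Pr :=
  (measure_inter_eq_lintegral_iff_condExp_indicator (pastSigma_le hW.1 n) (hW.1 (n + 1) hE)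
    ((κ.measurable_coe hE).comp (measurable_pastSigma le_rfl)) fun _ => prob_le_one).1
    (hW.2 n E hE) C hC

lemma setLIntegral_comp_succ [IsMarkovKernel κ] (hW : IsMarkovChain Pr κ W) (n : ℕ) {C : Set Ω}
    (hC : MeasurableSet[pastSigma W n] C) {f : S → ℝ≥0∞} (hf : Measurable f) :
    ∫⁻ ω in C, f (W (n + 1) ω) ∂Pr = ∫⁻ ω in C, ∫⁻ z, f z ∂(κ (W n ω)) ∂Pr := by
  have hκW : Measurable fun ω => κ (W n ω) := κ.measurable.comp (hW.1 n)
  have hmap : (Pr.restrict C).map (W (n + 1)) = (Pr.restrict C).bind (fun ω => κ (W n ω)) := by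
    ext E hE
    rw [Measure.map_apply (hW.1 (n + 1)) hE, Measure.bind_apply hE hκW.aemeasurable,
      Measure.restrict_apply (hW.1 (n + 1) hE)]
    exact hW.measure_preimage_succ_inter n hC hE
  rw [← lintegral_map hf (hW.1 (n + 1)), hmap,
    Measure.lintegral_bind hκW.aemeasurable hf.aemeasurable]

lemma ae_infinite_iff_tendsto_sum (hW : IsMarkovChain Pr κ W) {A : Set S} (hA : MeasurableSet A) :
    ∀ᵐ ω ∂Pr, {n | W n ω ∈ A}.Infinite ↔
      Tendsto (fun n => ∑ k ∈ Finset.range n, (κ (W k ω) A).toReal) atTop atTop := by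
  have hBC := ae_mem_limsup_atTop_iff Pr (ℱ := pastFiltration hW.1) (s := fun n => W n ⁻¹' A)
    fun n => measurable_pastSigma le_rfl hA
  filter_upwards [hBC, ae_all_iff.2 fun k => hW.2 k A hA] with ω hω hcond
  rw [← Nat.frequently_atTop_iff_infinite]
  exact mem_limsup_iff_frequently_mem.symm.trans <|
    hω.trans (tendsto_congr fun n => Finset.sum_congr rfl fun k _ => hcond k)

lemma ae_infinite_of_infinite_of_mul_le [IsMarkovKernel κ] (hW : IsMarkovChain Pr κ W) {A B : Set S}
    (hA : MeasurableSet A) (hB : MeasurableSet B) {ε : ℝ≥0∞} (hε0 : 0 < ε) (hε : ε ≠ ∞)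
    (hle : ∀ w, ε * κ w B ≤ κ w A) :
    ∀ᵐ ω ∂Pr, {n | W n ω ∈ B}.Infinite → {n | W n ω ∈ A}.Infinite := by
  filter_upwards [hW.ae_infinite_iff_tendsto_sum hA, hW.ae_infinite_iff_tendsto_sum hB]
    with ω hAω hBω hinf
  refine hAω.2 (tendsto_atTop_mono (fun n => ?_)
    ((hBω.1 hinf).const_mul_atTop (toReal_pos hε0.ne' hε)))
  rw [Finset.mul_sum]
  refine Finset.sum_le_sum fun k _ => ?_
  rw [← toReal_mul]
  exact toReal_mono (measure_ne_top _ _) (hle _)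

end IsMarkovChain

end MarkovChain

section AugmentedChain

variable {S T Ω : Type*} [MeasurableSpace S] [MeasurableSpace T] {mΩ : MeasurableSpace Ω}
  {Pr : Measure Ω} [IsProbabilityMeasure Pr] {P : Kernel S T} [IsMarkovKernel P]
  {κ : Kernel (S × T) (S × T)} [IsMarkovKernel κ] {K : Kernel S S} {W : ℕ → Ω → S × T}

lemma pastSigma_fst_succ_le (W : ℕ → Ω → S × T) (n : ℕ) :
    pastSigma (fun n ω => (W (n + 1) ω).1) n ≤
      pastSigma W n ⊔ MeasurableSpace.comap (fun ω => (W (n + 1) ω).1) inferInstance := by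
  refine iSup₂_le fun i hi => ?_
  rcases Nat.lt_succ_iff_lt_or_eq.1 (Finset.mem_range.1 hi) with h | rfl
  · exact le_sup_of_le_left
      (measurable_iff_comap_le.1 (measurable_fst.comp (measurable_pastSigma h)))
  · exact le_sup_right

namespace IsMarkovChain

variable (hW : IsMarkovChain Pr κ W) (hκ : ∀ w, κ w = (κ w).fst ⊗ₘ P)
  (hK : ∀ u B, MeasurableSet B → ∫⁻ v, κ (u, v) (Prod.fst ⁻¹' B) ∂(P u) = K u B)
include hW hκ hK

lemma measure_fst_preimage_inter_inter (n : ℕ) {F : Set Ω} (hF : MeasurableSet[pastSigma W n] F)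
    {D : Set S} (hD : MeasurableSet D) {B : Set S} (hB : MeasurableSet B) :
    Pr ((fun ω => (W (n + 2) ω).1) ⁻¹' B ∩ (F ∩ (fun ω => (W (n + 1) ω).1) ⁻¹' D)) =
      ∫⁻ ω in F ∩ (fun ω => (W (n + 1) ω).1) ⁻¹' D, K (W (n + 1) ω).1 B ∂Pr := by
  have hC : MeasurableSet[pastSigma W (n + 1)] (F ∩ W (n + 1) ⁻¹' (Prod.fst ⁻¹' D)) :=
    (pastSigma_mono n.le_succ F hF).inter (measurable_pastSigma le_rfl (measurable_fst hD))
  have hg : Measurable ((Prod.fst ⁻¹' D).indicator fun z => κ z (Prod.fst ⁻¹' B)) :=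
    (κ.measurable_coe (measurable_fst hB)).indicator (measurable_fst hD)
  have hh : Measurable (D.indicator fun u => K u B) := (K.measurable_coe hB).indicator hD
  calc Pr ((fun ω => (W (n + 2) ω).1) ⁻¹' B ∩ (F ∩ (fun ω => (W (n + 1) ω).1) ⁻¹' D))
      = ∫⁻ ω in F ∩ W (n + 1) ⁻¹' (Prod.fst ⁻¹' D), κ (W (n + 1) ω) (Prod.fst ⁻¹' B) ∂Pr :=
        hW.measure_preimage_succ_inter (n + 1) hC (measurable_fst hB)
    _ = ∫⁻ ω in F, (Prod.fst ⁻¹' D).indicator (fun z => κ z (Prod.fst ⁻¹' B)) (W (n + 1) ω) ∂Pr :=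
        setLIntegral_inter_preimage (hW.1 (n + 1)) (measurable_fst hD) F
          (fun z => κ z (Prod.fst ⁻¹' B))
    _ = ∫⁻ ω in F, ∫⁻ z, (Prod.fst ⁻¹' D).indicator (fun z => κ z (Prod.fst ⁻¹' B)) z
          ∂(κ (W n ω)) ∂Pr := hW.setLIntegral_comp_succ n hF hg
    _ = ∫⁻ ω in F, ∫⁻ z, D.indicator (fun u => K u B) z.1 ∂(κ (W n ω)) ∂Pr := by
        -- `hκ`: given its first coordinate, the second coordinate of `W (n + 1)` is `P`-distributed
        refine lintegral_congr fun ω => ?_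
        rw [hκ (W n ω)]
        refine Measure.lintegral_compProd_eq_of_lintegral_eq _ hg hh fun u => ?_
        by_cases hu : u ∈ D
        · simp [hu, hK u B hB]
        · simp [hu]
    _ = ∫⁻ ω in F, D.indicator (fun u => K u B) (W (n + 1) ω).1 ∂Pr :=
        (hW.setLIntegral_comp_succ n hF (hh.comp measurable_fst)).symm
    _ = ∫⁻ ω in F ∩ (fun ω => (W (n + 1) ω).1) ⁻¹' D, K (W (n + 1) ω).1 B ∂Pr :=
        (setLIntegral_inter_preimage (measurable_fst.comp (hW.1 (n + 1))) hD F _).symm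

lemma measure_fst_preimage_inter_of_measurableSet_sup (n : ℕ) {B : Set S} (hB : MeasurableSet B)
    {s : Set Ω} (hs : MeasurableSet[pastSigma W n ⊔
      MeasurableSpace.comap (fun ω => (W (n + 1) ω).1) inferInstance] s) :
    Pr ((fun ω => (W (n + 2) ω).1) ⁻¹' B ∩ s) =
      ∫⁻ ω in s, K (W (n + 1) ω).1 B ∂Pr := by
  have hB' : MeasurableSet ((fun ω => (W (n + 2) ω).1) ⁻¹' B) :=
    measurable_fst.comp (hW.1 (n + 2)) hB
  have hgen : ∀ t ∈ image2 (· ∩ ·) {s | MeasurableSet[pastSigma W n] s}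
      {t | MeasurableSet[MeasurableSpace.comap (fun ω => (W (n + 1) ω).1) inferInstance] t},
      Pr.restrict ((fun ω => (W (n + 2) ω).1) ⁻¹' B) t =
        Pr.withDensity (fun ω => K (W (n + 1) ω).1 B) t := by
    rintro _ ⟨F, hF, _, ⟨D, hD, rfl⟩, rfl⟩
    rw [Measure.restrict_apply' hB', withDensity_apply' _, inter_comm]
    exact hW.measure_fst_preimage_inter_inter hκ hK n hF hD hB
  have h := ext_on_measurableSpace_of_generate_finite mΩ _ hgen
    (sup_le (pastSigma_le hW.1 n) (measurable_fst.comp (hW.1 (n + 1))).comap_le)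
    (MeasurableSpace.sup_eq_generateFrom_image2_inter _ _)
    (MeasurableSpace.isPiSystem_image2_inter _ _)
    (hgen univ ⟨univ, by simp, univ, by simp, inter_self univ⟩) hs
  rwa [Measure.restrict_apply' hB', withDensity_apply' _, inter_comm] at h

theorem isMarkovChain_fst_succ [IsMarkovKernel K] :
    IsMarkovChain Pr K (fun n ω => (W (n + 1) ω).1) := by
  have hV : ∀ n, Measurable fun ω => (W (n + 1) ω).1 := fun n =>
    measurable_fst.comp (hW.1 (n + 1))
  refine ⟨hV, fun n B hB => ?_⟩
  refine (measure_inter_eq_lintegral_iff_condExp_indicator (pastSigma_le hV n) (hV (n + 1) hB)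
    ((K.measurable_coe hB).comp (measurable_pastSigma le_rfl)) fun _ => prob_le_one).2
    fun s hs => ?_
  exact hW.measure_fst_preimage_inter_of_measurableSet_sup hκ hK n hB
    (pastSigma_fst_succ_le W n s hs)

end IsMarkovChain

end AugmentedChain

theorem HarrisRecurrent.compProd {S T : Type*} [MeasurableSpace S] [MeasurableSpace T]
    {P : Kernel S T} [IsMarkovKernel P] {κ : Kernel (S × T) (S × T)} [IsMarkovKernel κ]
    {K : Kernel S S} [IsMarkovKernel K] {φ : Measure S} [SFinite φ]
    (hκ : ∀ w, κ w = (κ w).fst ⊗ₘ P)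
    (hK : ∀ u B, MeasurableSet B → ∫⁻ v, κ (u, v) (Prod.fst ⁻¹' B) ∂(P u) = K u B)
    (hHarris : HarrisRecurrent K φ) :
    HarrisRecurrent κ (φ ⊗ₘ P) := by
  intro Ω mΩ Pr hPr W hW A hA hApos
  rw [Measure.compProd_apply hA] at hApos
  obtain ⟨ε, hε0, hε, hφB⟩ := exists_pos_measure_lt_of_lintegral_pos hApos
  have hB : MeasurableSet {x | ε < P x (Prod.mk x ⁻¹' A)} :=
    measurableSet_lt measurable_const (Kernel.measurable_kernel_prodMk_left hA)
  have hlow : ∀ w, ε * κ w (Prod.fst ⁻¹' {x | ε < P x (Prod.mk x ⁻¹' A)}) ≤ κ w A := fun w => by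
    rw [hκ w]
    exact Measure.mul_compProd_fst_preimage_le _ hA hB fun u hu => le_of_lt hu
  filter_upwards [hHarris Ω mΩ Pr hPr _ (hW.isMarkovChain_fst_succ hκ hK) _ hB hφB,
    hW.ae_infinite_of_infinite_of_mul_le hA (measurable_fst hB) hε0 hε hlow] with ω hV hvisit
  refine hvisit <| (hV.image (add_left_injective 1).injOn).mono ?_
  rintro _ ⟨n, hn, rfl⟩
  exact hn

section MetropolisHastings

variable {G : Type*} {α : G → G → ℝ}

lemma mh_acceptance_mem_Icc {ρ : G → ℝ} (hρ0 : ∀ x, 0 ≤ ρ x) {p : G → G → ℝ}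
    (hp0 : ∀ x y, 0 ≤ p x y) {r : G → G → ℝ}
    (hr : ∀ x y, r x y = if 0 < ρ x * p x y then ρ y * p y x / (ρ x * p x y) else 1)
    (hα : ∀ x y, α x y = min 1 (r x y)) (x y : G) : α x y ∈ Icc 0 1 := by
  rw [hα, hr]
  refine ⟨le_min zero_le_one ?_, min_le_left _ _⟩
  split_ifs with h
  · exact div_nonneg (mul_nonneg (hρ0 y) (hp0 y x)) h.le
  · exact zero_le_one

variable [MeasurableSpace G]

lemma measurable_mh_acceptance {ρ : G → ℝ} (hρm : Measurable ρ) {p : G → G → ℝ}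
    (hpm : Measurable (Function.uncurry p)) {r : G → G → ℝ}
    (hr : ∀ x y, r x y = if 0 < ρ x * p x y then ρ y * p y x / (ρ x * p x y) else 1)
    (hα : ∀ x y, α x y = min 1 (r x y)) : Measurable (Function.uncurry α) := by
  have hden : Measurable fun q : G × G => ρ q.1 * p q.1 q.2 := (hρm.comp measurable_fst).mul hpm
  have hnum : Measurable fun q : G × G => ρ q.2 * p q.2 q.1 :=
    (hρm.comp measurable_snd).mul (hpm.comp measurable_swap)
  have hr' : Measurable (Function.uncurry r) := by
    simp_rw [Function.uncurry_def, hr]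
    exact Measurable.ite (measurableSet_lt measurable_const hden) (hnum.div hden) measurable_const
  simp_rw [Function.uncurry_def, hα]
  exact measurable_const.min hr'

variable {P : Kernel G G} [IsMarkovKernel P] {Kaug : Kernel (G × G) (G × G)}
  (hKaug : ∀ x y, Kaug (x, y) =
    ENNReal.ofReal (α x y) • ((Measure.dirac y).prod (P y)) +
    ENNReal.ofReal (1 - α x y) • ((Measure.dirac x).prod (P x)))
include hKaug

lemma mhAug_eq_fst_compProd (w : G × G) : Kaug w = (Kaug w).fst ⊗ₘ P := by
  suffices h : Kaug w = (ENNReal.ofReal (α w.1 w.2) • Measure.dirac w.2 +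
      ENNReal.ofReal (1 - α w.1 w.2) • Measure.dirac w.1) ⊗ₘ P by
    rw [h, Measure.fst_compProd]
  rw [hKaug, Measure.compProd_add_left, Measure.compProd_smul_left, Measure.compProd_smul_left,
    Measure.dirac_prod_eq_dirac_compProd, Measure.dirac_prod_eq_dirac_compProd]

lemma lintegral_mhAug_fst_preimage (hα01 : ∀ x y, α x y ∈ Icc 0 1)
    (hαm : Measurable (Function.uncurry α)) {K : Kernel G G}
    (hK : ∀ x, K x = (P x).withDensity (fun y => ENNReal.ofReal (α x y)) +
      ENNReal.ofReal (∫ y, (1 - α x y) ∂(P x)) • Measure.dirac x)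
    (u : G) {B : Set G} (hB : MeasurableSet B) :
    ∫⁻ v, Kaug (u, v) (Prod.fst ⁻¹' B) ∂(P u) = K u B := by
  have hαu : Measurable (α u) := hαm.comp measurable_prodMk_left
  have hsec : ∀ v, Kaug (u, v) (Prod.fst ⁻¹' B) =
      B.indicator (fun v => ENNReal.ofReal (α u v)) v +
        ENNReal.ofReal (1 - α u v) * Measure.dirac u B := by
    intro v
    rw [hKaug, ← prod_univ, Measure.add_apply, Measure.smul_apply, Measure.smul_apply,
      Measure.prod_prod, Measure.prod_prod, measure_univ, measure_univ, mul_one, mul_one,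
      Measure.dirac_apply' _ hB, smul_eq_mul, smul_eq_mul]
    by_cases hv : v ∈ B <;> simp [hv]
  have hreject : ENNReal.ofReal (∫ v, (1 - α u v) ∂(P u)) =
      ∫⁻ v, ENNReal.ofReal (1 - α u v) ∂(P u) := by
    refine ofReal_integral_eq_lintegral_ofReal ?_ (ae_of_all _ fun v => sub_nonneg.2 (hα01 u v).2)
    refine Integrable.of_bound (measurable_const.sub hαu).aestronglyMeasurable 1
      (ae_of_all _ fun v => ?_)
    obtain ⟨h0, h1⟩ := hα01 u v
    rw [Real.norm_eq_abs, abs_le]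
    constructor <;> linarith
  rw [lintegral_congr hsec, lintegral_add_left (hαu.ennreal_ofReal.indicator hB),
    lintegral_indicator hB, lintegral_mul_const (f := fun v => ENNReal.ofReal (1 - α u v))
      _ (measurable_const.sub hαu).ennreal_ofReal,
    ← hreject, hK u, Measure.add_apply, withDensity_apply _ hB, Measure.smul_apply, smul_eq_mul]

end MetropolisHastings

theorem Kaug_harris_recurrent_general
    {G : Type*} [MeasurableSpace G]
    (ρ : G → ℝ) (hρm : Measurable ρ) (hρ0 : ∀ x, 0 ≤ ρ x)
    (P : Kernel G G) [IsMarkovKernel P]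
    (p : G → G → ℝ) (hpm : Measurable (Function.uncurry p)) (hp0 : ∀ x y, 0 ≤ p x y)
    (r : G → G → ℝ)
    (hr : ∀ x y, r x y = if 0 < ρ x * p x y then ρ y * p y x / (ρ x * p x y) else 1)
    (α : G → G → ℝ) (hα : ∀ x y, α x y = min 1 (r x y))
    (K : Kernel G G) [IsMarkovKernel K]
    (hK : ∀ x, K x = (P x).withDensity (fun y => ENNReal.ofReal (α x y)) +
      ENNReal.ofReal (∫ y, (1 - α x y) ∂(P x)) • Measure.dirac x)
    (Kaug : Kernel (G × G) (G × G)) [IsMarkovKernel Kaug]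
    (hKaug : ∀ x y, Kaug (x, y) =
      ENNReal.ofReal (α x y) • ((Measure.dirac y).prod (P y)) +
      ENNReal.ofReal (1 - α x y) • ((Measure.dirac x).prod (P x)))
    (φ : Measure G) [SigmaFinite φ]
    (hHarris : HarrisRecurrent K φ) :
    HarrisRecurrent Kaug (φ.compProd P) :=
  hHarris.compProd (mhAug_eq_fst_compProd hKaug) fun u _ hB =>
    lintegral_mhAug_fst_preimage hKaug (mh_acceptance_mem_Icc hρ0 hp0 hr hα)
      (measurable_mh_acceptance hρm hpm hr hα) hK u hB

/-- If the MH chain is Harris recurrent w.r.t. φ, then the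
augmented chain (state, proposal) is Harris recurrent w.r.t. φ_P(dx dy) = P(x,dy)φ(dx). -/
theorem Kaug_harris_recurrent
    {G : Type*} [MeasurableSpace G]
    (μ₀ : Measure G) [SigmaFinite μ₀]
    (ρ : G → ℝ) (hρm : Measurable ρ) (hρ0 : ∀ x, 0 ≤ ρ x) (hρint : Integrable ρ μ₀)
    (Z : ℝ) (hZ : Z = ∫ x, ρ x ∂μ₀) (hZpos : 0 < Z)
    (μ : Measure G) [SFinite μ]
    (hμ : μ = μ₀.withDensity fun x => ENNReal.ofReal (ρ x / Z))
    (P : Kernel G G) [IsMarkovKernel P]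
    (p : G → G → ℝ) (hpm : Measurable (Function.uncurry p)) (hp0 : ∀ x y, 0 ≤ p x y)
    (hP : ∀ x, P x = μ₀.withDensity fun y => ENNReal.ofReal (p x y))
    (hpos : ∀ x y, 0 < ρ y → 0 < p x y)
    (bar : G → G → ℝ) (hbar : ∀ x y, bar x y = if 0 < ρ y then ρ y / p x y else 0)
    (r : G → G → ℝ)
    (hr : ∀ x y, r x y = if 0 < ρ x * p x y then ρ y * p y x / (ρ x * p x y) else 1)
    (α : G → G → ℝ) (hα : ∀ x y, α x y = min 1 (r x y))
    (K : Kernel G G) [IsMarkovKernel K]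
    (hK : ∀ x, K x = (P x).withDensity (fun y => ENNReal.ofReal (α x y)) +
      ENNReal.ofReal (∫ y, (1 - α x y) ∂(P x)) • Measure.dirac x)
    (Kaug : Kernel (G × G) (G × G)) [IsMarkovKernel Kaug]
    (hKaug : ∀ x y, Kaug (x, y) =
      ENNReal.ofReal (α x y) • ((Measure.dirac y).prod (P y)) +
      ENNReal.ofReal (1 - α x y) • ((Measure.dirac x).prod (P x)))
    (φ : Measure G) [SigmaFinite φ]
    (hHarris : HarrisRecurrent K φ) :
    HarrisRecurrent Kaug (φ.compProd P) :=
  Kaug_harris_recurrent_general ρ hρm hρ0 P p hpm hp0 r hr α hα K hK Kaug hKaug φ hHarris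
end

section
/- Let $f \in L^1(\mu)$, set $f_c = f - \mathbb E_\mu(f)$ and $h(x,y) = \bar\rho(x,y) f_c(y)$. Then the augmented MH transition operator annihilates $h$: $(\mathrm K_{\mathrm{aug}} h)(x,y) = 0$ for $\nu$-almost every $(x,y)$, and consequently $\mathrm K_{\mathrm{aug}}^k h = 0$ for all $k \geq 1$. -/
open MeasureTheory ProbabilityTheory ENNReal Filter

/-- The augmented MH transition operator annihilates
h(x,y) = ρ̄(x,y)(f(y) - E_μ f): K_aug h = 0 ν-a.e., and K_aug^k h = 0 for k ≥ 1. -/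
theorem Kaug_annihilates_weighted_centered
    {G : Type*} [MeasurableSpace G]
    (μ₀ : Measure G) [SigmaFinite μ₀]
    (ρ : G → ℝ) (hρm : Measurable ρ) (hρ0 : ∀ x, 0 ≤ ρ x) (hρint : Integrable ρ μ₀)
    (Z : ℝ) (hZ : Z = ∫ x, ρ x ∂μ₀) (hZpos : 0 < Z)
    (μ : Measure G) [SFinite μ]
    (hμ : μ = μ₀.withDensity fun x => ENNReal.ofReal (ρ x / Z))
    (P : Kernel G G) [IsMarkovKernel P]
    (p : G → G → ℝ) (hpm : Measurable (Function.uncurry p)) (hp0 : ∀ x y, 0 ≤ p x y)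
    (hP : ∀ x, P x = μ₀.withDensity fun y => ENNReal.ofReal (p x y))
    (hpos : ∀ x y, 0 < ρ y → 0 < p x y)
    (bar : G → G → ℝ) (hbar : ∀ x y, bar x y = if 0 < ρ y then ρ y / p x y else 0)
    (r : G → G → ℝ)
    (hr : ∀ x y, r x y = if 0 < ρ x * p x y then ρ y * p y x / (ρ x * p x y) else 1)
    (α : G → G → ℝ) (hα : ∀ x y, α x y = min 1 (r x y))
    (K : Kernel G G) [IsMarkovKernel K]
    (hK : ∀ x, K x = (P x).withDensity (fun y => ENNReal.ofReal (α x y)) +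
      ENNReal.ofReal (∫ y, (1 - α x y) ∂(P x)) • Measure.dirac x)
    (Kaug : Kernel (G × G) (G × G)) [IsMarkovKernel Kaug]
    (hKaug : ∀ x y, Kaug (x, y) =
      ENNReal.ofReal (α x y) • ((Measure.dirac y).prod (P y)) +
      ENNReal.ofReal (1 - α x y) • ((Measure.dirac x).prod (P x)))
    (ν : Measure (G × G)) (hν : ν = μ.compProd P)
    (KaugP : ℕ → Kernel (G × G) (G × G)) (hKaugP1 : KaugP 1 = Kaug)
    (hKaugPs : ∀ n, 1 ≤ n → KaugP (n + 1) = Kaug ∘ₖ KaugP n)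
    (f : G → ℝ) (hfm : Measurable f) (hf : Integrable f μ)
    (hh : Integrable (fun q : G × G => bar q.1 q.2 * (f q.2 - ∫ z, f z ∂μ)) ν) :
    (∀ᵐ q ∂ν, ∫ u, bar u.1 u.2 * (f u.2 - ∫ z, f z ∂μ) ∂(Kaug q) = 0) ∧
    (∀ k, 1 ≤ k → ∀ᵐ q ∂ν, ∫ u, bar u.1 u.2 * (f u.2 - ∫ z, f z ∂μ) ∂(KaugP k q) = 0) := by
  set c : ℝ := ∫ z, f z ∂μ with hc
  set h : G × G → ℝ := fun q => bar q.1 q.2 * (f q.2 - c) with hhdef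
  -- measurability of h
  have hbarm : Measurable fun q : G × G => bar q.1 q.2 := by
    have he : (fun q : G × G => bar q.1 q.2)
        = fun q : G × G => if 0 < ρ q.2 then ρ q.2 / p q.1 q.2 else 0 :=
      funext fun q => hbar q.1 q.2
    rw [he]
    exact Measurable.ite (measurableSet_lt measurable_const (hρm.comp measurable_snd))
      ((hρm.comp measurable_snd).div hpm) measurable_const
  have hhm : Measurable h := hbarm.mul ((hfm.comp measurable_snd).sub measurable_const)
  -- μ is a probability measure
  have hμprob : IsProbabilityMeasure μ := by
    constructor
    rw [hμ, withDensity_apply _ MeasurableSet.univ, Measure.restrict_univ,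
      ← ofReal_integral_eq_lintegral_ofReal (hρint.div_const Z)
        (ae_of_all _ fun x => div_nonneg (hρ0 x) hZpos.le)]
    rw [integral_div, ← hZ, div_self hZpos.ne']
    simp
  haveI := hμprob
  -- withDensity integral transfer
  have key : ∀ w : G → ℝ, Measurable w → (∀ x, 0 ≤ w x) → ∀ g : G → ℝ,
      ∫ x, g x ∂(μ₀.withDensity fun x => ENNReal.ofReal (w x)) = ∫ x, w x * g x ∂μ₀ := by
    intro w hwm hw0 g
    have h1 : (fun x => ENNReal.ofReal (w x)) = fun x => ((w x).toNNReal : ℝ≥0∞) := rfl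
    rw [h1, integral_withDensity_eq_integral_smul hwm.real_toNNReal]
    congr 1
    ext x
    simp [NNReal.smul_def, Real.coe_toNNReal _ (hw0 x)]
  -- centering
  have hcenter : ∫ x, ρ x * (f x - c) ∂μ₀ = 0 := by
    have h0 : ∫ x, (f x - c) ∂μ = 0 := by
      rw [integral_sub hf (integrable_const c), integral_const]
      simp [hc]
    rw [hμ, key (fun x => ρ x / Z) (hρm.div_const Z)
      (fun x => div_nonneg (hρ0 x) hZpos.le)] at h0
    have he : (fun x => ρ x / Z * (f x - c)) = fun x => Z⁻¹ * (ρ x * (f x - c)) :=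
      funext fun x => by ring
    rw [he] at h0
    simp only [← smul_eq_mul] at h0
    rw [integral_smul] at h0
    simp only [smul_eq_mul] at h0
    rcases mul_eq_zero.mp h0 with h | h
    · exact absurd h (inv_ne_zero hZpos.ne')
    · exact h
  -- the key vanishing identity
  have hL : ∀ u, ∫ v, bar u v * (f v - c) ∂(P u) = 0 := by
    intro u
    rw [hP u, key (p u) hpm.of_uncurry_left (hp0 u)]
    have he : (fun v => p u v * (bar u v * (f v - c))) = fun v => ρ v * (f v - c) := by
      funext v
      rw [hbar]
      by_cases hv : 0 < ρ v
      · rw [if_pos hv]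
        field_simp
        exact mul_div_cancel_left₀ _ (hpos u v hv).ne'
      · have hv0 : ρ v = 0 := le_antisymm (not_lt.1 hv) (hρ0 v)
        rw [if_neg hv, hv0]
        ring
    rw [he, hcenter]
  have hdirac : ∀ u, ∫ q, h q ∂((Measure.dirac u).prod (P u)) = 0 := by
    intro u
    rw [Measure.dirac_prod, integral_map measurable_prodMk_left.aemeasurable
      hhm.aestronglyMeasurable]
    exact hL u
  have hKaug0 : ∀ q : G × G, ∫ u, h u ∂(Kaug q) = 0 := by
    rintro ⟨x, y⟩
    rw [hKaug x y]
    by_cases hint : Integrable h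
        (ENNReal.ofReal (α x y) • ((Measure.dirac y).prod (P y)) +
          ENNReal.ofReal (1 - α x y) • ((Measure.dirac x).prod (P x)))
    · obtain ⟨i1, i2⟩ := integrable_add_measure.mp hint
      rw [integral_add_measure i1 i2, integral_smul_measure, integral_smul_measure,
        hdirac y, hdirac x]
      simp
    · exact integral_undef hint
  refine ⟨ae_of_all _ fun q => hKaug0 q, ?_⟩
  have main : ∀ k, 1 ≤ k → IsMarkovKernel (KaugP k) ∧
      ∀ q, ∫ u, h u ∂(KaugP k q) = 0 := by
    intro k hk
    induction k with
    | zero => omega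
    | succ n ih =>
      by_cases hn : 1 ≤ n
      · obtain ⟨hM, hI⟩ := ih hn
        haveI := hM
        constructor
        · rw [hKaugPs n hn]; infer_instance
        · intro q
          rw [hKaugPs n hn, Kernel.comp_eq_snd_compProd, Kernel.snd_apply,
            integral_map measurable_snd.aemeasurable hhm.aestronglyMeasurable]
          by_cases hint : Integrable (fun z : (G × G) × (G × G) => h z.2)
              ((KaugP n ⊗ₖ Kernel.prodMkLeft (G × G) Kaug) q)
          · rw [ProbabilityTheory.integral_compProd hint]
            simp only [Kernel.prodMkLeft_apply]
            simp [hKaug0]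
          · exact integral_undef hint
      · have hn0 : n = 0 := by omega
        subst hn0
        constructor
        · rw [hKaugP1]; infer_instance
        · intro q; rw [hKaugP1]; exact hKaug0 q
  exact fun k hk => ae_of_all _ fun q => (main k hk).2 q
end
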